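/- For n qubits with observables u_j, v_j whose eigenbases are related by |u_j=1⟩ = α_j|v_j=1⟩ + β_j|v_j=2⟩, |u_j=2⟩ = β_j*|v_j=1⟩ − α_j*|v_j=2⟩ with 0 < |α_j|,|β_j| < 1, the subspace S of (ℂ²)^⊗n spanned by |φ_0⟩ = |v_1=2⟩⋯|v_n=2⟩ together with all product states having |v_r=1⟩ in slot r and |u_{r+1}=1⟩ in slot r+1 (cyclically) and arbitrary basis vectors elsewhere has dimension 2^n − 1, and the product state |φ_+⟩ = |u_1=1⟩⋯|u_n=1⟩ does not lie in S. -/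

import Mathlib

/-- The product state `⊗ᵢ f i` of `n` qubits, as an element of `(ℂ²)^⊗n`
modeled by `EuclideanSpace ℂ (Fin n → Fin 2)`. -/
noncomputable def prodN {n : ℕ} (f : Fin n → EuclideanSpace ℂ (Fin 2)) :
    EuclideanSpace ℂ (Fin n → Fin 2) :=
  (WithLp.equiv 2 _).symm (fun x => ∏ i, f i (x i))

/-!
Write `B x = ⊗ᵢ v i (x i)` for the product basis. If `c ⊥ S`, pairing `c` with the generator that
carries `v r 0` in slot `r`, `u m 0 = α_m v m 0 + β_m v m 1` in slot `m = r + 1` and `v i (x i)`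
elsewhere gives `ᾱ_m ⟪B x[m ↦ 0], c⟫ + β̄_m ⟪B x[m ↦ 1], c⟫ = 0` whenever `x r = 0`. As `β_m ≠ 0`,
this determines every coefficient `⟪B x, c⟫` with `x ≠ 1` from `⟪B 0, c⟫`, and `c ⊥ φ₀ = B 1`
kills the last one; so `dim Sᗮ ≤ 1`. Conversely `χ = ⊗ᵢ u i 1 - (∏ᵢ -ᾱᵢ) φ₀` lies in `Sᗮ`, and
`⟪φ₊, χ⟫ = -(∏ᵢ -ᾱᵢ)(∏ᵢ β̄ᵢ) ≠ 0`. Hence `Sᗮ = ℂ χ` has dimension `1` and `φ₊ ∉ S`.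
-/

open Function Finset
open scoped InnerProductSpace ComplexConjugate

section CyclicRecurrence

variable {ι : Type*} {σ : ι → ι}

lemma exists_apply_eq_zero_and_apply_eq_one (hσ : ∀ i j, ∃ k, σ^[k] j = i) {x : ι → Fin 2}
    {i j : ι} (hi : x i = 1) (hj : x j = 0) : ∃ r, x r = 0 ∧ x (σ r) = 1 := by
  by_contra! h
  obtain ⟨k, rfl⟩ := hσ i j
  have hzero : ∀ k, x (σ^[k] j) = 0 := by
    intro k
    induction k with
    | zero => exact hj
    | succ k ih => have := h _ ih; rw [iterate_succ_apply']; omega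
  rw [hzero] at hi
  exact absurd hi (by decide)

/-- Induction on the number of `1`s in `x`: some `r` has `x r = 0` and `x (σ r) = 1`, and the
recurrence at `(r, x)` expresses `F x` through `F` at a point with one `1` fewer. -/
lemma eq_zero_of_cyclic_recurrence [Fintype ι] [DecidableEq ι] {R : Type*} [Semiring R]
    [NoZeroDivisors R]
    (hσ : ∀ i j, ∃ k, σ^[k] j = i) (a b : ι → R) (hb : ∀ i, b i ≠ 0)
    {F : (ι → Fin 2) → R} (hF0 : F 0 = 0) (hF1 : F 1 = 0)
    (hrec : ∀ r x, x r = 0 →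
      a (σ r) * F (update x (σ r) 0) + b (σ r) * F (update x (σ r) 1) = 0) :
    F = 0 := by
  funext x
  induction hk : #{i | x i = 1} using Nat.strong_induction_on generalizing x with
  | _ k ih =>
  by_cases hx0 : x = 0
  · rw [hx0, hF0, Pi.zero_apply]
  by_cases hx1 : x = 1
  · rw [hx1, hF1, Pi.zero_apply]
  obtain ⟨i, hi⟩ : ∃ i, x i = 1 := by
    by_contra! h; exact hx0 (funext fun i => by have := h i; simp only [Pi.zero_apply]; omega)
  obtain ⟨j, hj⟩ : ∃ j, x j = 0 := by
    by_contra! h; exact hx1 (funext fun j => by have := h j; simp only [Pi.one_apply]; omega)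
  obtain ⟨r, hr0, hr1⟩ := exists_apply_eq_zero_and_apply_eq_one hσ hi hj
  have hfewer : #{i | update x (σ r) 0 i = 1} < k := by
    rw [← hk]
    refine card_lt_card ⟨fun l hl => ?_, fun hsub => ?_⟩
    · simp only [mem_filter, mem_univ, true_and] at hl ⊢
      rwa [update_of_ne (by rintro rfl; simp at hl)] at hl
    · have := hsub (by simpa using hr1); simp at this
  have hupd : update x (σ r) 1 = x := update_eq_self_iff.mpr hr1.symm
  have := hrec r x hr0
  rw [hupd, ih _ hfewer _ rfl, Pi.zero_apply, mul_zero, zero_add] at this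
  exact (mul_eq_zero.mp this).resolve_left (hb _)

end CyclicRecurrence

section CyclicSucc

variable {n : ℕ}

def cyclicSucc (r : Fin n) : Fin n :=
  ⟨(r.1 + 1) % n, Nat.mod_lt _ (Nat.zero_lt_of_lt r.2)⟩

lemma val_cyclicSucc_iterate (k : ℕ) (j : Fin n) : (cyclicSucc^[k] j).val = (j.val + k) % n := by
  induction k with
  | zero => simp [Nat.mod_eq_of_lt j.2]
  | succ k ih => simp [iterate_succ_apply', cyclicSucc, ih, Nat.add_assoc]

lemma exists_cyclicSucc_iterate_eq (i j : Fin n) : ∃ k, cyclicSucc^[k] j = i :=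
  ⟨n - j + i, Fin.ext <| by
    rw [val_cyclicSucc_iterate, show j.val + (n - j + i) = i + n by omega, Nat.add_mod_right,
      Nat.mod_eq_of_lt i.2]⟩

lemma cyclicSucc_ne_self (hn : 2 ≤ n) (r : Fin n) : cyclicSucc r ≠ r := by
  intro h
  have hval : (r.1 + 1) % n = r.1 := congrArg Fin.val h
  rcases lt_or_ge (r.1 + 1) n with hlt | hge
  · rw [Nat.mod_eq_of_lt hlt] at hval; omega
  · rw [show r.1 + 1 = n by omega, Nat.mod_self] at hval; omega

end CyclicSucc

section ProductStates

variable {n : ℕ}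

lemma prodN_apply (f : Fin n → EuclideanSpace ℂ (Fin 2)) (x : Fin n → Fin 2) :
    prodN f x = ∏ i, f i (x i) := rfl

lemma inner_prodN (f g : Fin n → EuclideanSpace ℂ (Fin 2)) :
    ⟪prodN f, prodN g⟫_ℂ = ∏ i, ⟪f i, g i⟫_ℂ := by
  simp only [PiLp.inner_apply, RCLike.inner_apply, prodN_apply]
  rw [prod_univ_sum]
  simp [Fintype.piFinset_univ, map_prod, prod_mul_distrib]

lemma prodN_update_add_smul (f : Fin n → EuclideanSpace ℂ (Fin 2)) (j : Fin n) (a b : ℂ)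
    (p q : EuclideanSpace ℂ (Fin 2)) :
    prodN (update f j (a • p + b • q)) =
      a • prodN (update f j p) + b • prodN (update f j q) := by
  have hoff : ∀ w (x : Fin n → Fin 2),
      ∏ i ∈ {j}ᶜ, update f j w i (x i) = ∏ i ∈ {j}ᶜ, f i (x i) := fun w x =>
    prod_congr rfl fun i hi => by rw [update_of_ne (by simpa using hi)]
  ext x
  simp only [prodN_apply, Fintype.prod_eq_mul_prod_compl j, update_self, hoff, PiLp.add_apply,
    PiLp.smul_apply, smul_eq_mul]
  ring

lemma orthonormal_prodN {v : Fin n → Fin 2 → EuclideanSpace ℂ (Fin 2)}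
    (hv : ∀ i, Orthonormal ℂ (v i)) :
    Orthonormal ℂ fun x : Fin n → Fin 2 => prodN fun i => v i (x i) := by
  classical
  refine orthonormal_iff_ite.mpr fun x y => ?_
  rw [inner_prodN]
  split_ifs with h
  · subst h; simp [fun i => (hv i).1]
  · obtain ⟨i, hi⟩ : ∃ i, x i ≠ y i := by by_contra! hc; exact h (funext hc)
    exact prod_eq_zero (mem_univ i) (by rw [orthonormal_iff_ite.mp (hv i), if_neg hi])

lemma eq_zero_of_forall_inner_prodN_eq_zero {v : Fin n → Fin 2 → EuclideanSpace ℂ (Fin 2)}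
    (hv : ∀ i, Orthonormal ℂ (v i)) {c : EuclideanSpace ℂ (Fin n → Fin 2)}
    (hc : ∀ x : Fin n → Fin 2, ⟪prodN (fun i => v i (x i)), c⟫_ℂ = 0) : c = 0 := by
  let b := basisOfOrthonormalOfCardEqFinrank (orthonormal_prodN hv) finrank_euclideanSpace.symm
  refine InnerProductSpace.ext_inner_left_basis b fun x => ?_
  simp [b, hc]

end ProductStates

section Qubit

variable {E : Type*} [NormedAddCommGroup E] [InnerProductSpace ℂ E] {e : Fin 2 → E}

lemma Orthonormal.inner_fin_two_right (he : Orthonormal ℂ e) (k : Fin 2) (a b : ℂ) :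
    ⟪e k, a • e 0 + b • e 1⟫_ℂ = ![a, b] k := by
  simpa only [Fin.sum_univ_two, Matrix.cons_val_zero, Matrix.cons_val_one] using
    he.inner_right_fintype ![a, b] k

lemma Orthonormal.inner_smul_add_smul_conj_smul_sub_smul (he : Orthonormal ℂ e) (a b : ℂ) :
    ⟪a • e 0 + b • e 1, conj b • e 0 - conj a • e 1⟫_ℂ = 0 := by
  rw [sub_eq_add_neg, ← neg_smul, inner_add_left, inner_smul_left, inner_smul_left,
    he.inner_fin_two_right, he.inner_fin_two_right]
  simp only [Matrix.cons_val_zero, Matrix.cons_val_one]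
  ring

lemma Orthonormal.inner_one_smul_sub_smul (he : Orthonormal ℂ e) (a b : ℂ) :
    ⟪e 1, a • e 0 - b • e 1⟫_ℂ = -b := by
  simpa [sub_eq_add_neg] using he.inner_fin_two_right 1 a (-b)

end Qubit

section Hardy

variable {n : ℕ} (v u : Fin n → Fin 2 → EuclideanSpace ℂ (Fin 2))

/-- The space `S`: slot `i` of a second-family generator outside `{r, r + 1}` is `v i k` for
`g i = (k, true)` and `u i k` for `g i = (k, false)`. Index `0` is the paper's outcome `1`. -/
def hardySpan : Submodule ℂ (EuclideanSpace ℂ (Fin n → Fin 2)) :=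
  Submodule.span ℂ (insert (prodN fun i => v i 1)
    {ψ | ∃ (r : Fin n) (g : Fin n → Fin 2 × Bool), ψ = prodN fun i =>
      if i = r then v i 0 else if i = cyclicSucc r then u i 0
      else if (g i).2 then v i (g i).1 else u i (g i).1})

/-- The first term is orthogonal to every second-family generator through slot `r + 1`, the
second through slot `r`, and the coefficient `∏ -ᾱᵢ = ⟪φ₀, ⊗ u i 1⟫` makes it orthogonal to
`φ₀`. -/
noncomputable def hardyWitness (α : Fin n → ℂ) : EuclideanSpace ℂ (Fin n → Fin 2) :=
  prodN (fun i => u i 1) - (∏ i, -conj (α i)) • prodN (fun i => v i 1)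

variable {v u} {α β : Fin n → ℂ} (hv : ∀ j, Orthonormal ℂ (v j))
  (hu0 : ∀ j, u j 0 = α j • v j 0 + β j • v j 1)
  (hu1 : ∀ j, u j 1 = conj (β j) • v j 0 - conj (α j) • v j 1)

include hu0 in
lemma smul_add_smul_mem_hardySpan (hn : 2 ≤ n) (r : Fin n) (x : Fin n → Fin 2) (hx : x r = 0) :
    α (cyclicSucc r) • prodN (fun i => v i (update x (cyclicSucc r) 0 i)) +
      β (cyclicSucc r) • prodN (fun i => v i (update x (cyclicSucc r) 1 i)) ∈ hardySpan v u := by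
  set m := cyclicSucc r
  have hmr : m ≠ r := cyclicSucc_ne_self hn r
  have hslot : ∀ k, (fun i => v i (update x m k i)) = update (fun i => v i (x i)) m (v m k) :=
    fun k => funext fun i => apply_update (fun i => v i) x m k i
  have hgen : (prodN fun i => if i = r then v i 0 else if i = m then u i 0 else v i (x i)) =
      prodN (update (fun i => v i (x i)) m (α m • v m 0 + β m • v m 1)) := by
    congr 1
    funext i
    rcases eq_or_ne i m with rfl | him
    · simp [hmr, hu0]
    · rcases eq_or_ne i r with rfl | hir
      · simp [him, hx]
      · simp [him, hir]
  rw [hslot, hslot, ← prodN_update_add_smul, ← hgen]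
  exact Submodule.subset_span (Set.mem_insert_of_mem _ ⟨r, fun i => (x i, true), rfl⟩)

include hv hu1 in
lemma inner_prodN_one_prodN_u_one :
    ⟪prodN (fun i => v i 1), prodN (fun i => u i 1)⟫_ℂ = ∏ i, -conj (α i) :=
  (inner_prodN _ _).trans (prod_congr rfl fun i _ => by rw [hu1, (hv i).inner_one_smul_sub_smul])

include hv hu0 hu1 in
lemma inner_u_zero_u_one (j : Fin n) : ⟪u j 0, u j 1⟫_ℂ = 0 := by
  rw [hu0, hu1]
  exact (hv j).inner_smul_add_smul_conj_smul_sub_smul _ _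

include hv hu0 hu1 in
lemma hardyWitness_mem_orthogonal (hn : 2 ≤ n) : hardyWitness v u α ∈ (hardySpan v u)ᗮ := by
  refine (Submodule.isOrtho_span.mpr ?_).ge (Submodule.mem_span_singleton_self _)
  rintro ψ hψ _ rfl
  rw [hardyWitness, inner_sub_right, inner_smul_right]
  rcases hψ with rfl | ⟨r, g, rfl⟩
  · have hnorm : ‖prodN fun i => v i 1‖ = 1 := (orthonormal_prodN hv).1 1
    rw [inner_prodN_one_prodN_u_one hv hu1, inner_self_eq_one_of_norm_eq_one hnorm]
    ring
  · rw [inner_prodN, inner_prodN, prod_eq_zero (i := cyclicSucc r) (mem_univ _), zero_sub,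
      neg_eq_zero]
    · exact mul_eq_zero_of_right _
        (prod_eq_zero (mem_univ r) (by simpa using (hv r).2 zero_ne_one))
    · simpa [cyclicSucc_ne_self hn r] using inner_u_zero_u_one hv hu0 hu1 _

include hv hu0 hu1 in
lemma inner_prodN_u_zero_hardyWitness_ne_zero (hn : 0 < n) (hα : ∀ j, α j ≠ 0)
    (hβ : ∀ j, β j ≠ 0) : ⟪prodN (fun i => u i 0), hardyWitness v u α⟫_ℂ ≠ 0 := by
  have hβ' : ∀ i, ⟪u i 0, v i 1⟫_ℂ = conj (β i) := fun i => by
    rw [← inner_conj_symm, hu0, (hv i).inner_fin_two_right]; rfl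
  rw [hardyWitness, inner_sub_right, inner_smul_right, inner_prodN, inner_prodN,
    prod_eq_zero (mem_univ ⟨0, hn⟩) (inner_u_zero_u_one hv hu0 hu1 _), zero_sub, neg_ne_zero]
  simp only [hβ']
  exact mul_ne_zero (prod_ne_zero_iff.mpr fun i _ => by simpa using hα i)
    (prod_ne_zero_iff.mpr fun i _ => by simpa using hβ i)

include hv hu0 in
lemma eq_zero_of_mem_orthogonal_hardySpan (hn : 2 ≤ n) (hβ : ∀ j, β j ≠ 0)
    {c : EuclideanSpace ℂ (Fin n → Fin 2)} (hc : c ∈ (hardySpan v u)ᗮ)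
    (h0 : ⟪prodN (fun i => v i 0), c⟫_ℂ = 0) : c = 0 := by
  classical
  suffices hF : (fun x : Fin n → Fin 2 => ⟪prodN (fun i => v i (x i)), c⟫_ℂ) = 0 from
    eq_zero_of_forall_inner_prodN_eq_zero hv (congrFun hF)
  refine eq_zero_of_cyclic_recurrence exists_cyclicSucc_iterate_eq (fun i => conj (α i))
    (fun i => conj (β i)) (fun i => by simpa using hβ i) h0 ?_ fun r x hx => ?_
  · exact Submodule.inner_right_of_mem_orthogonal
      (Submodule.subset_span (Set.mem_insert _ _)) hc
  · have := Submodule.inner_right_of_mem_orthogonal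
      (smul_add_smul_mem_hardySpan hu0 hn r x hx) hc
    rwa [inner_add_left, inner_smul_left, inner_smul_left] at this

include hv hu0 hu1 in
lemma finrank_orthogonal_hardySpan (hn : 2 ≤ n) (hα : ∀ j, α j ≠ 0) (hβ : ∀ j, β j ≠ 0) :
    Module.finrank ℂ (hardySpan v u)ᗮ = 1 := by
  refine le_antisymm ?_ ?_
  · have hinj : Function.Injective
        ((innerSL ℂ (prodN fun i => v i 0)).toLinearMap ∘ₗ (hardySpan v u)ᗮ.subtype) :=
      (injective_iff_map_eq_zero _).mpr fun c hc =>
        Subtype.ext (eq_zero_of_mem_orthogonal_hardySpan hv hu0 hn hβ c.2 hc)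
    simpa using LinearMap.finrank_le_finrank_of_injective hinj
  · refine Submodule.one_le_finrank_iff.mpr fun hbot => ?_
    have hχ := hardyWitness_mem_orthogonal hv hu0 hu1 hn
    rw [hbot, Submodule.mem_bot] at hχ
    exact inner_prodN_u_zero_hardyWitness_ne_zero hv hu0 hu1 (by omega) hα hβ
      (by rw [hχ, inner_zero_right])

end Hardy

theorem statement14_general (n : ℕ) (hn : 2 ≤ n)
    (v u : Fin n → Fin 2 → EuclideanSpace ℂ (Fin 2))
    (hv : ∀ j, Orthonormal ℂ (v j))
    (α β : Fin n → ℂ)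
    (hα : ∀ j, 0 < ‖α j‖ ∧ ‖α j‖ < 1)
    (hβ : ∀ j, 0 < ‖β j‖ ∧ ‖β j‖ < 1)
    (hu0 : ∀ j, u j 0 = α j • v j 0 + β j • v j 1)
    (hu1 : ∀ j, u j 1 = (starRingEnd ℂ) (β j) • v j 0 - (starRingEnd ℂ) (α j) • v j 1) :
    letI next : Fin n → Fin n := fun r =>
      ⟨(r.1 + 1) % n, Nat.mod_lt _ (Nat.zero_lt_of_lt r.2)⟩
    letI pick : (Fin n → Fin 2 × Bool) → Fin n → EuclideanSpace ℂ (Fin 2) :=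
      fun g i => if (g i).2 then v i (g i).1 else u i (g i).1
    letI S : Submodule ℂ (EuclideanSpace ℂ (Fin n → Fin 2)) :=
      Submodule.span ℂ
        (insert (prodN (fun i => v i 1))
          {ψ | ∃ (r : Fin n) (g : Fin n → Fin 2 × Bool),
            ψ = prodN (fun i =>
              if i = r then v i 0 else if i = next r then u i 0 else pick g i)})
    Module.finrank ℂ S = 2 ^ n - 1 ∧ prodN (fun i => u i 0) ∉ S := by
  show Module.finrank ℂ (hardySpan v u) = 2 ^ n - 1 ∧ prodN (fun i => u i 0) ∉ hardySpan v u
  have hα0 : ∀ j, α j ≠ 0 := fun j => norm_pos_iff.mp (hα j).1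
  have hβ0 : ∀ j, β j ≠ 0 := fun j => norm_pos_iff.mp (hβ j).1
  have hdim := (hardySpan v u).finrank_add_finrank_orthogonal
  rw [finrank_orthogonal_hardySpan hv hu0 hu1 hn hα0 hβ0, finrank_euclideanSpace,
    Fintype.card_fun, Fintype.card_fin, Fintype.card_fin] at hdim
  refine ⟨by omega, fun hmem => ?_⟩
  exact inner_prodN_u_zero_hardyWitness_ne_zero hv hu0 hu1 (by omega) hα0 hβ0
    (Submodule.inner_right_of_mem_orthogonal hmem (hardyWitness_mem_orthogonal hv hu0 hu1 hn))

/-- For `n` qubits with observables `u_j, v_j` whose eigenbases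
are related by `|u_j=1⟩ = α_j|v_j=1⟩ + β_j|v_j=2⟩`,
`|u_j=2⟩ = β_j*|v_j=1⟩ − α_j*|v_j=2⟩` (`0 < |α_j|, |β_j| < 1`), the subspace `S`
of `(ℂ²)^{⊗n}` spanned by `|φ_0⟩ = |v_1=2⟩⋯|v_n=2⟩` together with all product
states having `|v_r=1⟩` in slot `r` and `|u_{r+1}=1⟩` in slot `r+1` (cyclically)
and arbitrary basis vectors (from either eigenbasis) elsewhere, has dimension
`2^n − 1`, and `|φ_+⟩ = |u_1=1⟩⋯|u_n=1⟩ ∉ S`.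
(Indexing: `|v_j=1⟩ = v j 0`, `|v_j=2⟩ = v j 1`, similarly for `u`.) -/
theorem statement14 (n : ℕ) (hn : 2 ≤ n)
    (v u : Fin n → Fin 2 → EuclideanSpace ℂ (Fin 2))
    (hv : ∀ j, Orthonormal ℂ (v j))
    (α β : Fin n → ℂ)
    (hnorm : ∀ j, ‖α j‖ ^ 2 + ‖β j‖ ^ 2 = 1)
    (hα : ∀ j, 0 < ‖α j‖ ∧ ‖α j‖ < 1)
    (hβ : ∀ j, 0 < ‖β j‖ ∧ ‖β j‖ < 1)
    (hu0 : ∀ j, u j 0 = α j • v j 0 + β j • v j 1)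
    (hu1 : ∀ j, u j 1 = (starRingEnd ℂ) (β j) • v j 0 - (starRingEnd ℂ) (α j) • v j 1) :
    letI next : Fin n → Fin n := fun r =>
      ⟨(r.1 + 1) % n, Nat.mod_lt _ (Nat.zero_lt_of_lt r.2)⟩
    letI pick : (Fin n → Fin 2 × Bool) → Fin n → EuclideanSpace ℂ (Fin 2) :=
      fun g i => if (g i).2 then v i (g i).1 else u i (g i).1
    letI S : Submodule ℂ (EuclideanSpace ℂ (Fin n → Fin 2)) :=
      Submodule.span ℂ
        (insert (prodN (fun i => v i 1))
          {ψ | ∃ (r : Fin n) (g : Fin n → Fin 2 × Bool),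
            ψ = prodN (fun i =>
              if i = r then v i 0 else if i = next r then u i 0 else pick g i)})
    Module.finrank ℂ S = 2 ^ n - 1 ∧ prodN (fun i => u i 0) ∉ S :=
  statement14_general n hn v u hv α β hα hβ hu0 hu1
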